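/- Let $f: [0,T] \to [0,\infty)$ be a measurable function satisfying $f(t) \leq \int_0^t C f(s) + 2A\sqrt{f(s)} + \delta^2\, ds$ for all $t \in [0,T]$, where $A, \delta \geq 0$ and $C > 0$. Then $f(t) \leq (\frac{2A^2}{C} + \delta^2)\, t\, e^{3Ct/2}$ for all $t \in [0,T]$. -/

import Mathlib

open MeasureTheory intervalIntegral Real

/-- Grönwall-type bound: if a measurable `f : [0,T] → [0,∞)` satisfies
`f t ≤ ∫₀ᵗ (C f(s) + 2A √(f s) + δ²) ds` for all `t ∈ [0,T]`, with `C > 0` and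
`A, δ ≥ 0`, then `f t ≤ (2A²/C + δ²) t e^{3Ct/2}`. -/
theorem stmt_8 (T C A δ : ℝ) (hC : 0 < C) (hA : 0 ≤ A) (hδ : 0 ≤ δ)
    (f : ℝ → ℝ) (hfm : Measurable f) (hf0 : ∀ t, 0 ≤ f t)
    (hineq : ∀ t ∈ Set.Icc (0 : ℝ) T,
      f t ≤ ∫ s in (0 : ℝ)..t, (C * f s + 2 * A * Real.sqrt (f s) + δ ^ 2)) :
    ∀ t ∈ Set.Icc (0 : ℝ) T,
      f t ≤ (2 * A ^ 2 / C + δ ^ 2) * t * Real.exp (3 * C * t / 2) := by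
  intro t ht
  obtain ⟨ht0, htT⟩ := ht
  set K := 3 * C / 2 with hKdef
  set B := 2 * A ^ 2 / C + δ ^ 2 with hBdef
  have hK0 : 0 < K := by positivity
  have hB0 : 0 ≤ B := by positivity
  set g : ℝ → ℝ := fun s => C * f s + 2 * A * Real.sqrt (f s) + δ ^ 2 with hgdef
  have hg0 : ∀ s, 0 ≤ g s := by
    intro s
    have := Real.sqrt_nonneg (f s)
    have := hf0 s
    positivity
  have hgle : ∀ s, g s ≤ K * f s + B := by
    intro s
    have hrf : Real.sqrt (f s) ^ 2 = f s := Real.sq_sqrt (hf0 s)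
    have h2 : 2 * A * Real.sqrt (f s) * C ≤ 2 * A ^ 2 + C / 2 * Real.sqrt (f s) ^ 2 * C := by
      nlinarith [sq_nonneg (C * Real.sqrt (f s) - 2 * A)]
    rw [hrf] at h2
    have h3 : 2 * A * Real.sqrt (f s) ≤ (2 * A ^ 2 + C / 2 * f s * C) / C :=
      (le_div_iff₀ hC).mpr h2
    have h4 : (2 * A ^ 2 + C / 2 * f s * C) / C = 2 * A ^ 2 / C + C / 2 * f s := by
      rw [add_div, mul_div_cancel_right₀ _ hC.ne']
    rw [h4] at h3
    simp only [hgdef, hKdef, hBdef]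
    linarith
  -- nonnegativity of the goal RHS
  have hRHS0 : 0 ≤ B * t * Real.exp (K * t) := by positivity
  show f t ≤ B * t * Real.exp (3 * C * t / 2)
  have hexp_eq : Real.exp (3 * C * t / 2) = Real.exp (K * t) := by
    rw [hKdef]; ring_nf
  rw [hexp_eq]
  by_cases hgi : IntervalIntegrable g volume 0 t
  · -- main case
    set M := ∫ s in (0:ℝ)..t, g s with hMdef
    have hM0 : 0 ≤ M := intervalIntegral.integral_nonneg ht0 (fun u _ => hg0 u)
    -- f is interval integrable on [0,t]
    have hgm : Measurable g := by
      apply Measurable.add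
      apply Measurable.add
      · exact hfm.const_mul C
      · exact ((Real.continuous_sqrt.measurable).comp hfm).const_mul (2 * A)
      · exact measurable_const
    have hfi : IntervalIntegrable f volume 0 t := by
      apply (hgi.div_const C).mono_fun' (hfm.aestronglyMeasurable)
      filter_upwards with x
      rw [Real.norm_eq_abs, abs_of_nonneg (hf0 x)]
      have := hg0 x
      have h1 : C * f x ≤ g x := by
        simp only [hgdef]
        have := Real.sqrt_nonneg (f x); nlinarith
      rw [le_div_iff₀ hC]
      linarith [h1]
    -- f ≤ M on [0, t]
    have hfM : ∀ s ∈ Set.Icc (0:ℝ) t, f s ≤ M := by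
      intro s hs
      have h1 : f s ≤ ∫ u in (0:ℝ)..s, g u := hineq s ⟨hs.1, hs.2.trans htT⟩
      have h2 : (∫ u in (0:ℝ)..s, g u) ≤ M := by
        apply intervalIntegral.integral_mono_interval le_rfl hs.1 hs.2
        · filter_upwards with x; exact hg0 x
        · exact hgi
      linarith
    -- key step inequality
    have hkey : ∀ s ∈ Set.Icc (0:ℝ) t, f s ≤ B * s + K * ∫ u in (0:ℝ)..s, f u := by
      intro s hs
      have h1 : f s ≤ ∫ u in (0:ℝ)..s, g u := hineq s ⟨hs.1, hs.2.trans htT⟩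
      have hgi' : IntervalIntegrable g volume 0 s :=
        hgi.mono_set' (Set.uIoc_subset_uIoc_of_uIcc_subset_uIcc (by
          rw [Set.uIcc_of_le hs.1, Set.uIcc_of_le ht0]
          exact Set.Icc_subset_Icc le_rfl hs.2))
      have hfi' : IntervalIntegrable f volume 0 s :=
        hfi.mono_set' (Set.uIoc_subset_uIoc_of_uIcc_subset_uIcc (by
          rw [Set.uIcc_of_le hs.1, Set.uIcc_of_le ht0]
          exact Set.Icc_subset_Icc le_rfl hs.2))
      have h2 : (∫ u in (0:ℝ)..s, g u) ≤ ∫ u in (0:ℝ)..s, (K * f u + B) := by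
        apply intervalIntegral.integral_mono_on hs.1 hgi'
        · exact (hfi'.const_mul K).add (intervalIntegrable_const)
        · intro u _; exact hgle u
      have h3 : (∫ u in (0:ℝ)..s, (K * f u + B)) = K * (∫ u in (0:ℝ)..s, f u) + B * s := by
        rw [intervalIntegral.integral_add (hfi'.const_mul K) intervalIntegrable_const,
          intervalIntegral.integral_const_mul, intervalIntegral.integral_const]
        simp only [smul_eq_mul, sub_zero]
        ring
      linarith
    -- exact integral of u * exp(K u)
    have hIexp : ∀ s : ℝ, (∫ u in (0:ℝ)..s, u * Real.exp (K * u))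
        = s * Real.exp (K * s) / K - Real.exp (K * s) / K ^ 2 + 1 / K ^ 2 := by
      intro s
      have : ∀ u : ℝ, HasDerivAt (fun x => x * Real.exp (K * x) / K - Real.exp (K * x) / K ^ 2)
          (u * Real.exp (K * u)) u := by
        intro u
        have he : HasDerivAt (fun x : ℝ => Real.exp (K * x)) (K * Real.exp (K * u)) u := by
          simpa [mul_comm] using ((hasDerivAt_id u).const_mul K).exp
        have h1 := ((hasDerivAt_id u).mul he).div_const K
        simp only [id_eq, one_mul] at h1
        have h2 : HasDerivAt (fun x : ℝ => Real.exp (K * x) / K ^ 2)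
            (K * Real.exp (K * u) / K ^ 2) u := he.div_const _
        have := h1.sub h2
        refine this.congr_deriv ?_
        field_simp
        ring
      rw [intervalIntegral.integral_eq_sub_of_hasDerivAt (fun u _ => this u)
        (by apply Continuous.intervalIntegrable; fun_prop)]
      simp only [mul_zero, Real.exp_zero, zero_mul, zero_div, mul_one]
      ring
    -- induction
    have hmain : ∀ n : ℕ, ∀ s ∈ Set.Icc (0:ℝ) t,
        f s ≤ B * s * Real.exp (K * s) + K ^ n * M * s ^ n / n.factorial := by
      intro n
      induction n with
      | zero =>
        intro s hs
        have := hfM s hs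
        have h1 : 0 ≤ B * s * Real.exp (K * s) := by
          have := hs.1; positivity
        simp only [pow_zero, one_mul, mul_one, Nat.factorial_zero, Nat.cast_one, div_one]
        linarith
      | succ n ih =>
        intro s hs
        have h0 : f s ≤ B * s + K * ∫ u in (0:ℝ)..s, f u := hkey s hs
        have hbound : (∫ u in (0:ℝ)..s, f u)
            ≤ ∫ u in (0:ℝ)..s, (B * u * Real.exp (K * u) + K ^ n * M * u ^ n / n.factorial) := by
          apply intervalIntegral.integral_mono_on hs.1
          · exact hfi.mono_set' (Set.uIoc_subset_uIoc_of_uIcc_subset_uIcc (by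
              rw [Set.uIcc_of_le hs.1, Set.uIcc_of_le ht0]
              exact Set.Icc_subset_Icc le_rfl hs.2))
          · apply Continuous.intervalIntegrable; fun_prop
          · intro u hu; exact ih u ⟨hu.1, hu.2.trans hs.2⟩
        have hcomp : (∫ u in (0:ℝ)..s, (B * u * Real.exp (K * u) + K ^ n * M * u ^ n / n.factorial))
            = B * (s * Real.exp (K * s) / K - Real.exp (K * s) / K ^ 2 + 1 / K ^ 2)
              + K ^ n * M / n.factorial * (s ^ (n+1) / (n+1)) := by
          rw [intervalIntegral.integral_add]
          · congr 1
            · have : (fun u : ℝ => B * u * Real.exp (K * u)) = fun u => B * (u * Real.exp (K * u)) := by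
                funext u; ring
              rw [this, intervalIntegral.integral_const_mul, hIexp s]
            · have : (fun u : ℝ => K ^ n * M * u ^ n / n.factorial)
                  = fun u => (K ^ n * M / n.factorial) * u ^ n := by
                funext u; ring
              rw [this, intervalIntegral.integral_const_mul, integral_pow]
              push_cast; ring
          · apply Continuous.intervalIntegrable; fun_prop
          · apply Continuous.intervalIntegrable; fun_prop
        have hs0 := hs.1
        have hexp1 : K * s + 1 ≤ Real.exp (K * s) := Real.add_one_le_exp _
        have hfact : (n.factorial : ℝ) > 0 := by positivity
        calc f s ≤ B * s + K * ∫ u in (0:ℝ)..s, f u := h0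
          _ ≤ B * s + K * (B * (s * Real.exp (K * s) / K - Real.exp (K * s) / K ^ 2 + 1 / K ^ 2)
              + K ^ n * M / n.factorial * (s ^ (n+1) / (n+1))) := by
            have := hbound
            nlinarith [hK0]
          _ = B * s + B * s * Real.exp (K * s) - B * Real.exp (K * s) / K + B / K
              + K ^ (n+1) * M * s ^ (n+1) / (n+1).factorial := by
            rw [Nat.factorial_succ]
            push_cast
            field_simp
            ring
          _ ≤ B * s * Real.exp (K * s) + K ^ (n+1) * M * s ^ (n+1) / (n+1).factorial := by
            have : B * s ≤ B * Real.exp (K * s) / K - B / K := by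
              rw [← sub_nonneg]
              have h := div_nonneg (mul_nonneg hB0 (sub_nonneg.mpr hexp1)) hK0.le
              calc (0:ℝ) ≤ B * (Real.exp (K * s) - (K * s + 1)) / K := h
                _ = B * Real.exp (K * s) / K - B / K - B * s := by field_simp; ring
            linarith
    -- take the limit
    have hlim : Filter.Tendsto (fun n : ℕ => B * t * Real.exp (K * t) + K ^ n * M * t ^ n / n.factorial)
        Filter.atTop (nhds (B * t * Real.exp (K * t))) := by
      have h2 : Filter.Tendsto (fun n : ℕ => K ^ n * M * t ^ n / n.factorial)
          Filter.atTop (nhds 0) := by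
        have h3 := (FloorSemiring.tendsto_pow_div_factorial_atTop (K * t)).const_mul M
        rw [mul_zero] at h3
        refine h3.congr (fun n => ?_)
        rw [mul_pow]; ring
      simpa using Filter.Tendsto.const_add (B * t * Real.exp (K * t)) h2
    exact ge_of_tendsto' hlim (fun n => hmain n t ⟨ht0, le_rfl⟩)
  · -- g not interval integrable: the integral is 0
    have h0 : f t ≤ 0 := by
      have := hineq t ⟨ht0, htT⟩
      rwa [intervalIntegral.integral_undef hgi] at this
    have := hf0 t
    have : f t = 0 := le_antisymm h0 this
    rw [this]
    positivity
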